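/- arXiv:math/0402218 — 2 statements merged into one kernel-verified Lean document; each statement's English description precedes it below -/
import Mathlib

section
/- Let V ⊆ ℝ^N be the cone on a compact set L ⊆ ℝ^N with cone point v (i.e., V = {(1−t)v + t·x : x ∈ L, t ∈ [0,1]}), and suppose v ∉ L and the coning is injective away from the cone point. Embed ℝ^N in ℝ^{N+1} = ℝ^N × ℝ, fix H > 0, and consider X = (L × [0,H]) ∪ (V × {H}) ⊆ ℝ^{N+1}. Then the stereographic projection from the point (v, −H) ∈ ℝ^N × ℝ, restricted appropriately, defines a homeomorphism from V × {0} to X. -/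
open Set

/-- The "inverse" stereographic map: project a point `q` of `X` along the segment from
`(v,-H)` to `q` down to height `0`. -/
private noncomputable def stereoPsi {N : ℕ} (v : EuclideanSpace ℝ (Fin N)) (H : ℝ)
    (q : EuclideanSpace ℝ (Fin N) × ℝ) : EuclideanSpace ℝ (Fin N) × ℝ :=
  (v + (H / (q.2 + H)) • (q.1 - v), 0)

/-- Recovery map: from the cone parameter `u` and the point `x ∈ L`, recover the point of
`X` projecting to `(1-u)•v + u•x`. -/
private noncomputable def stereoR {N : ℕ} (v : EuclideanSpace ℝ (Fin N)) (H : ℝ)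
    (u : ℝ) (x : EuclideanSpace ℝ (Fin N)) : EuclideanSpace ℝ (Fin N) × ℝ :=
  if 1/2 ≤ u then (x, H/u - H) else ((1-2*u) • v + (2*u) • x, H)

/-- let `V ⊆ ℝ^N` be the cone with vertex `v` over a compact set `L`
(with `v ∉ L` and the coning injective away from the cone point), and for `H > 0` let
`X = (L × [0,H]) ∪ (V × {H}) ⊆ ℝ^N × ℝ`.  Then the stereographic projection from the
point `(v, -H)` defines a homeomorphism from `V × {0}` onto `X`: there is a homeomorphism
`φ` sending each point `p` of `V × {0}` to a point on the ray emanating from `(v,-H)`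
through `p`. -/
theorem stereographic_homeomorph_cone {N : ℕ}
    (L : Set (EuclideanSpace ℝ (Fin N))) (v : EuclideanSpace ℝ (Fin N))
    (hL : IsCompact L) (hv : v ∉ L)
    (V : Set (EuclideanSpace ℝ (Fin N)))
    (hV : V = {y | ∃ x ∈ L, ∃ t ∈ Icc (0:ℝ) 1, y = (1 - t) • v + t • x})
    (hinj : ∀ x ∈ L, ∀ x' ∈ L, ∀ t ∈ Ioc (0:ℝ) 1, ∀ t' ∈ Ioc (0:ℝ) 1,
      (1 - t) • v + t • x = (1 - t') • v + t' • x' → t = t' ∧ x = x')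
    (H : ℝ) (hH : 0 < H)
    (X : Set (EuclideanSpace ℝ (Fin N) × ℝ))
    (hX : X = (L ×ˢ Icc (0:ℝ) H) ∪ (V ×ˢ {H})) :
    ∃ φ : (V ×ˢ ({0} : Set ℝ) : Set (EuclideanSpace ℝ (Fin N) × ℝ)) ≃ₜ X,
      ∀ p : (V ×ˢ ({0} : Set ℝ) : Set (EuclideanSpace ℝ (Fin N) × ℝ)),
        ∃ t : ℝ, 1 ≤ t ∧
          (φ p : EuclideanSpace ℝ (Fin N) × ℝ) = (v, -H) + t • ((p : EuclideanSpace ℝ (Fin N) × ℝ) - (v, -H)) := by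
  have hH0 : (H:ℝ) ≠ 0 := ne_of_gt hH
  -- bounds on the height of points of `X`
  have hq2 : ∀ q ∈ X, 0 ≤ q.2 ∧ q.2 ≤ H := by
    intro q hq
    rw [hX] at hq
    rcases hq with hq | hq
    · exact ⟨hq.2.1, hq.2.2⟩
    · have h2 : q.2 = H := hq.2
      exact ⟨h2 ▸ hH.le, h2.le⟩
  have hden : ∀ q ∈ X, 0 < q.2 + H := fun q hq => by
    have := (hq2 q hq).1; linarith
  -- representation lemma
  have hrep : ∀ q ∈ X, q.1 ≠ v → ∃ x ∈ L, ∃ u ∈ Ioc (0:ℝ) 1,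
      (stereoPsi v H q).1 = (1-u) • v + u • x ∧ q = stereoR v H u x := by
    intro q hq hqv
    rw [hX] at hq
    rcases hq with hq | hq
    · -- q ∈ L × [0,H]
      have hx : q.1 ∈ L := hq.1
      have h0 : 0 ≤ q.2 := hq.2.1
      have hHle : q.2 ≤ H := hq.2.2
      have hd : 0 < q.2 + H := by linarith
      set u := H / (q.2 + H) with hu
      have hu0 : 0 < u := div_pos hH hd
      have hu1 : u ≤ 1 := by rw [div_le_one hd]; linarith
      have hhalf : 1/2 ≤ u := by rw [le_div_iff₀ hd]; linarith
      refine ⟨q.1, hx, u, ⟨hu0, hu1⟩, ?_, ?_⟩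
      · show v + u • (q.1 - v) = (1-u) • v + u • q.1
        module
      · rw [stereoR, if_pos hhalf]
        have h1 : u * (q.2 + H) = H := div_mul_cancel₀ _ hd.ne'
        have h2 : H / u - H = q.2 := by
          have h3 : H / u = q.2 + H := by
            rw [div_eq_iff hu0.ne']; linarith
          linarith
        rw [h2]
    · -- q ∈ V × {H}
      have hqH : q.2 = H := hq.2
      have hq1 : q.1 ∈ V := hq.1
      rw [hV] at hq1
      obtain ⟨x, hx, s, ⟨hs0, hs1⟩, hy⟩ := hq1
      have hs0' : 0 < s := by
        rcases hs0.lt_or_eq with h | h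
        · exact h
        · exfalso; apply hqv; rw [hy, ← h]; simp
      have hr : H / (q.2 + H) = 1/2 := by
        rw [hqH]; field_simp; ring
      refine ⟨x, hx, s/2, ⟨by linarith, by linarith⟩, ?_, ?_⟩
      · show v + (H / (q.2 + H)) • (q.1 - v) = (1-s/2) • v + (s/2) • x
        rw [hr, hy]; module
      · rcases eq_or_lt_of_le hs1 with h1 | h1
        · -- s = 1
          subst h1
          have hhalf : (1:ℝ)/2 ≤ 1/2 := le_refl _
          rw [stereoR, if_pos hhalf, Prod.ext_iff]
          refine ⟨?_, ?_⟩
          · show q.1 = x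
            rw [hy]; module
          · show q.2 = H / (1/2) - H
            rw [hqH]; norm_num; ring
        · have hnot : ¬ ((1:ℝ)/2 ≤ s/2) := by linarith
          rw [stereoR, if_neg hnot, Prod.ext_iff]
          refine ⟨?_, ?_⟩
          · show q.1 = (1-2*(s/2)) • v + (2*(s/2)) • x
            rw [hy]; module
          · exact hqH
  -- vertex detection
  have hpsiv : ∀ q ∈ X, ((stereoPsi v H q).1 = v ↔ q.1 = v) := by
    intro q hq
    have hd := hden q hq
    constructor
    · intro h
      have h' : (H / (q.2 + H)) • (q.1 - v) = 0 := by
        have := h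
        rw [stereoPsi] at this
        simpa [add_eq_left] using this
      rcases smul_eq_zero.mp h' with h0 | h0
      · exact absurd h0 (div_ne_zero hH0 hd.ne')
      · exact sub_eq_zero.mp h0
    · intro h; rw [stereoPsi]; simp [h]
  -- the vertex case: if q ∈ X has q.1 = v, then q = (v, H)
  have hvertex : ∀ q ∈ X, q.1 = v → q = (v, H) := by
    intro q hq h
    rw [hX] at hq
    rcases hq with hq | hq
    · exact absurd (h ▸ hq.1) hv
    · have : q.2 = H := hq.2
      ext
      · exact congrFun (congrArg WithLp.ofLp h) _
      · exact this
  -- membership of the image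
  have hmem : ∀ q ∈ X, stereoPsi v H q ∈ V ×ˢ ({0} : Set ℝ) := by
    intro q hq
    constructor
    · by_cases h : q.1 = v
      · have : (stereoPsi v H q).1 = v := (hpsiv q hq).mpr h
        rw [this]
        have hq' := hvertex q hq h
        rw [hX] at hq
        rcases hq with hq | hq
        · exact absurd (h ▸ hq.1) hv
        · exact h ▸ hq.1
      · obtain ⟨x, hx, u, hu, he, -⟩ := hrep q hq h
        rw [hV]
        exact ⟨x, hx, u, ⟨hu.1.le, hu.2⟩, he⟩
    · rfl
  -- injectivity on X
  have hinjX : InjOn (stereoPsi v H) X := by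
    intro q hq q' hq' heq
    have heq1 : (stereoPsi v H q).1 = (stereoPsi v H q').1 := congrArg Prod.fst heq
    by_cases h : q.1 = v
    · have h1 : (stereoPsi v H q).1 = v := (hpsiv q hq).mpr h
      have h2 : q'.1 = v := (hpsiv q' hq').mp (heq1 ▸ h1)
      rw [hvertex q hq h, hvertex q' hq' h2]
    · have h' : q'.1 ≠ v := by
        intro hcon
        apply h
        exact (hpsiv q hq).mp (heq1.trans ((hpsiv q' hq').mpr hcon))
      obtain ⟨x, hx, u, hu, he, hR⟩ := hrep q hq h
      obtain ⟨x', hx', u', hu', he', hR'⟩ := hrep q' hq' h'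
      have := hinj x hx x' hx' u hu u' hu' (by rw [← he, ← he', heq1])
      obtain ⟨h1, h2⟩ := this
      rw [hR, hR', h1, h2]
  -- surjectivity onto V × {0}
  have hsurj : ∀ p ∈ V ×ˢ ({0} : Set ℝ), ∃ q ∈ X, stereoPsi v H q = p := by
    intro p hp
    have hp2 : p.2 = 0 := hp.2
    have hp1 := hp.1
    rw [hV] at hp1
    obtain ⟨x, hx, s, ⟨hs0, hs1⟩, hy⟩ := hp1
    by_cases hs : 1/2 ≤ s
    · have hs0' : (0:ℝ) < s := by linarith
      refine ⟨(x, H/s - H), ?_, ?_⟩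
      · rw [hX]
        left
        refine ⟨hx, ?_, ?_⟩
        · show (0:ℝ) ≤ H/s - H
          have : H ≤ H / s := by
            rw [le_div_iff₀ hs0']; nlinarith
          linarith
        · show H/s - H ≤ H
          have : H / s ≤ 2*H := by
            rw [div_le_iff₀ hs0']; nlinarith
          linarith
      · have hd : H/s - H + H = H/s := by ring
        have h2 : H / (H/s) = s := by
          field_simp
        rw [Prod.ext_iff]
        refine ⟨?_, ?_⟩
        · show v + (H / (H/s - H + H)) • (x - v) = p.1
          rw [hd, h2, hy]; module
        · exact hp2.symm
    · push_neg at hs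
      refine ⟨((1-2*s) • v + (2*s) • x, H), ?_, ?_⟩
      · rw [hX]
        right
        refine ⟨?_, rfl⟩
        rw [hV]
        exact ⟨x, hx, 2*s, ⟨by linarith, by linarith⟩, by module⟩
      · have hr : H / (H + H) = 1/2 := by field_simp; ring
        rw [Prod.ext_iff]
        refine ⟨?_, ?_⟩
        · show v + (H / (H + H)) • (((1-2*s) • v + (2*s) • x) - v) = p.1
          rw [hr, hy]; module
        · exact hp2.symm
  -- compactness
  have hVcomp : IsCompact V := by
    have himg : V = (fun p : EuclideanSpace ℝ (Fin N) × ℝ =>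
        (1 - p.2) • v + p.2 • p.1) '' (L ×ˢ Icc 0 1) := by
      rw [hV]; ext y
      simp only [mem_image, mem_setOf_eq, mem_prod]
      constructor
      · rintro ⟨x, hx, t, ht, rfl⟩; exact ⟨(x, t), ⟨hx, ht⟩, rfl⟩
      · rintro ⟨⟨x, t⟩, ⟨hx, ht⟩, rfl⟩; exact ⟨x, hx, t, ht, rfl⟩
    rw [himg]
    exact (hL.prod isCompact_Icc).image (by fun_prop)
  have hXcomp : IsCompact X := by
    rw [hX]
    exact (hL.prod isCompact_Icc).union (hVcomp.prod isCompact_singleton)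
  haveI : CompactSpace X := isCompact_iff_compactSpace.mp hXcomp
  -- the bundled map
  let Ψ' : X → (V ×ˢ ({0} : Set ℝ) : Set (EuclideanSpace ℝ (Fin N) × ℝ)) :=
    fun q => ⟨stereoPsi v H q, hmem q q.2⟩
  have hbij : Function.Bijective Ψ' := by
    constructor
    · intro a b hab
      exact Subtype.ext (hinjX a.2 b.2 (congrArg Subtype.val hab))
    · intro p
      obtain ⟨q, hq, hΨq⟩ := hsurj p p.2
      exact ⟨⟨q, hq⟩, Subtype.ext hΨq⟩
  have hcont : Continuous Ψ' := by
    apply Continuous.subtype_mk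
    have hne : ∀ q : X, ((q : EuclideanSpace ℝ (Fin N) × ℝ).2 + H) ≠ 0 :=
      fun q => (hden q q.2).ne'
    apply Continuous.prodMk
    · apply Continuous.add continuous_const
      apply Continuous.fun_smul
      · exact Continuous.div continuous_const (by fun_prop) hne
      · fun_prop
    · exact continuous_const
  let e : X ≃ (V ×ˢ ({0} : Set ℝ) : Set (EuclideanSpace ℝ (Fin N) × ℝ)) :=
    Equiv.ofBijective Ψ' hbij
  have hconte : Continuous e := hcont
  let h : X ≃ₜ (V ×ˢ ({0} : Set ℝ) : Set (EuclideanSpace ℝ (Fin N) × ℝ)) :=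
    hconte.homeoOfEquivCompactToT2
  refine ⟨h.symm, ?_⟩
  intro p
  set q := h.symm p with hqdef
  have hqp : stereoPsi v H (q : EuclideanSpace ℝ (Fin N) × ℝ) =
      (p : EuclideanSpace ℝ (Fin N) × ℝ) := by
    have := h.apply_symm_apply p
    exact congrArg Subtype.val this
  have hqX := q.2
  have hd : 0 < (q : EuclideanSpace ℝ (Fin N) × ℝ).2 + H := hden _ hqX
  refine ⟨((q : EuclideanSpace ℝ (Fin N) × ℝ).2 + H) / H, ?_, ?_⟩
  · rw [le_div_iff₀ hH]
    have := (hq2 _ hqX).1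
    linarith
  · have hp2 : (p : EuclideanSpace ℝ (Fin N) × ℝ).2 = 0 := p.2.2
    have hp1 : v + (H / ((q : EuclideanSpace ℝ (Fin N) × ℝ).2 + H)) •
        ((q : EuclideanSpace ℝ (Fin N) × ℝ).1 - v) =
        (p : EuclideanSpace ℝ (Fin N) × ℝ).1 := congrArg Prod.fst hqp
    set t := ((q : EuclideanSpace ℝ (Fin N) × ℝ).2 + H) / H with ht
    have htr : t * (H / ((q : EuclideanSpace ℝ (Fin N) × ℝ).2 + H)) = 1 := by
      rw [ht]; field_simp
    rw [Prod.ext_iff]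
    refine ⟨?_, ?_⟩
    · have : ((v, -H) + t • ((p : EuclideanSpace ℝ (Fin N) × ℝ) - (v, -H))).1 =
          v + t • ((p : EuclideanSpace ℝ (Fin N) × ℝ).1 - v) := by
        simp [Prod.add_def, Prod.smul_def]
      rw [this]
      have : v + t • ((p : EuclideanSpace ℝ (Fin N) × ℝ).1 - v) =
          (q : EuclideanSpace ℝ (Fin N) × ℝ).1 := by
        rw [← hp1]
        have : t • ((v + (H / ((q : EuclideanSpace ℝ (Fin N) × ℝ).2 + H)) •
            ((q : EuclideanSpace ℝ (Fin N) × ℝ).1 - v)) - v) =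
            (t * (H / ((q : EuclideanSpace ℝ (Fin N) × ℝ).2 + H))) •
            ((q : EuclideanSpace ℝ (Fin N) × ℝ).1 - v) := by
          rw [add_sub_cancel_left, smul_smul]
        rw [this, htr, one_smul, add_sub_cancel]
      rw [this]
    · show (q : EuclideanSpace ℝ (Fin N) × ℝ).2 =
        ((v, -H) + t • ((p : EuclideanSpace ℝ (Fin N) × ℝ) - (v, -H))).2
      have : ((v, -H) + t • ((p : EuclideanSpace ℝ (Fin N) × ℝ) - (v, -H))).2 =
          -H + t * ((p : EuclideanSpace ℝ (Fin N) × ℝ).2 - (-H)) := by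
        simp [Prod.add_def, Prod.smul_def]
      rw [this, hp2, ht]
      field_simp
      ring
end

section
/- Let Δ^n ⊆ ℝ^{n+1} be the standard n-simplex with ordered vertices v₀ < v₁ < ⋯ < v_n, and for x = Σ λ_i v_i ∈ Δ^n with barycentric coordinates (λ₀,…,λ_n), define pseudo-coordinates x_i = λ_i/(λ₀ + ⋯ + λ_i) for those i with λ₀ + ⋯ + λ_i > 0. Fix an index i, and let s : Δ^n → Δ^n be the simplicial retraction determined by s(v_j) = v_i for j < i and s(v_j) = v_j for j ≥ i, extended affinely, and set s_t(x) = (1−t)x + t·s(x). Then for every j ≠ i with j ≥ 1 and every t ∈ [0,1], the pseudo-coordinate x_j of s_t(x) equals the pseudo-coordinate x_j of x (whenever both are defined). -/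
open Set Finset

/-- The simplicial retraction of the standard simplex (in barycentric coordinates)
determined by `v_j ↦ v_i` for `j < i` and `v_j ↦ v_j` for `j ≥ i`: all the mass on the
vertices below `v_i` is pushed onto `v_i`. -/
def simplexRetraction {n : ℕ} (i : Fin (n + 1)) (lam : Fin (n + 1) → ℝ) :
    Fin (n + 1) → ℝ :=
  fun j => if j < i then 0 else if j = i then ∑ k ∈ Finset.Iic i, lam k else lam j

/-- The `j`-th pseudo-coordinate `x_j = λ_j / (λ_0 + ⋯ + λ_j)` of a point of the standard
simplex with barycentric coordinates `λ`. -/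
noncomputable def pseudoCoord {n : ℕ} (j : Fin (n + 1)) (lam : Fin (n + 1) → ℝ) : ℝ :=
  lam j / ∑ k ∈ Finset.Iic j, lam k

lemma retraction_sum_eq {n : ℕ} (i j : Fin (n + 1)) (lam : Fin (n + 1) → ℝ)
    (hij : i < j) :
    ∑ k ∈ Finset.Iic j, simplexRetraction i lam k = ∑ k ∈ Finset.Iic j, lam k := by
  have hsplit : Finset.Iic j = Finset.Iic i ∪ Finset.Ioc i j := by
    ext k
    simp only [Finset.mem_Iic, Finset.mem_union, Finset.mem_Ioc]
    constructor
    · intro hk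
      rcases le_or_gt k i with h | h
      · exact Or.inl h
      · exact Or.inr ⟨h, hk⟩
    · rintro (h | ⟨_, h⟩)
      · exact h.trans hij.le
      · exact h
  have hdisj : Disjoint (Finset.Iic i) (Finset.Ioc i j) := by
    rw [Finset.disjoint_left]
    intro k hk hk'
    simp only [Finset.mem_Iic] at hk
    simp only [Finset.mem_Ioc] at hk'
    exact absurd hk (not_le.mpr hk'.1)
  rw [hsplit, Finset.sum_union hdisj, Finset.sum_union hdisj]
  congr 1
  · have h1 : ∑ k ∈ Finset.Iic i, simplexRetraction i lam k
        = ∑ k ∈ Finset.Iic i, (if k = i then ∑ m ∈ Finset.Iic i, lam m else 0) := by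
      apply Finset.sum_congr rfl
      intro k hk
      simp only [Finset.mem_Iic] at hk
      rcases lt_or_eq_of_le hk with h | h
      · simp [simplexRetraction, h, ne_of_lt h]
      · simp [simplexRetraction, h]
    rw [h1, Finset.sum_ite_eq' (Finset.Iic i) i (fun _ => ∑ m ∈ Finset.Iic i, lam m)]
    simp
  · apply Finset.sum_congr rfl
    intro k hk
    simp only [Finset.mem_Ioc] at hk
    simp [simplexRetraction, not_lt.mpr hk.1.le, (hk.1).ne']

/-- the straight-line homotopy `s_t` from the identity to the simplicial
retraction at the vertex `v_i` preserves the `j`-th pseudo-coordinate for every `j ≠ i`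
with `j ≥ 1`, whenever both pseudo-coordinates are defined. -/
theorem pseudoCoord_invariant {n : ℕ} (i j : Fin (n + 1))
    (lam : Fin (n + 1) → ℝ)
    (hmem : lam ∈ stdSimplex ℝ (Fin (n + 1)))
    (t : ℝ) (ht : t ∈ Icc (0:ℝ) 1)
    (hji : j ≠ i) (hj1 : 1 ≤ (j : ℕ))
    (hdef : 0 < ∑ k ∈ Finset.Iic j, lam k)
    (hdef' : 0 < ∑ k ∈ Finset.Iic j,
      ((1 - t) * lam k + t * simplexRetraction i lam k)) :
    pseudoCoord j (fun k => (1 - t) * lam k + t * simplexRetraction i lam k)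
      = pseudoCoord j lam := by
  rcases lt_or_gt_of_ne hji with hlt | hgt
  · -- j < i : all retraction terms in Iic j vanish
    have hret : ∀ k ∈ Finset.Iic j, simplexRetraction i lam k = 0 := by
      intro k hk
      simp only [Finset.mem_Iic] at hk
      simp [simplexRetraction, lt_of_le_of_lt hk hlt]
    have hsum : ∑ k ∈ Finset.Iic j, ((1 - t) * lam k + t * simplexRetraction i lam k)
        = (1 - t) * ∑ k ∈ Finset.Iic j, lam k := by
      rw [Finset.mul_sum]
      apply Finset.sum_congr rfl
      intro k hk
      rw [hret k hk]; ring
    have hjret : simplexRetraction i lam j = 0 := hret j (Finset.mem_Iic.mpr le_rfl)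
    have ht1 : (1 - t) ≠ 0 := by
      intro h
      rw [hsum, h, zero_mul] at hdef'
      exact lt_irrefl 0 hdef'
    simp only [pseudoCoord, hsum, hjret]
    rw [mul_zero, add_zero, mul_div_mul_left _ _ ht1]
  · -- i < j
    have hsum : ∑ k ∈ Finset.Iic j, ((1 - t) * lam k + t * simplexRetraction i lam k)
        = ∑ k ∈ Finset.Iic j, lam k := by
      rw [Finset.sum_add_distrib, ← Finset.mul_sum, ← Finset.mul_sum,
        retraction_sum_eq i j lam hgt]
      ring
    have hjret : simplexRetraction i lam j = lam j := by
      simp [simplexRetraction, not_lt.mpr hgt.le, hgt.ne']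
    simp only [pseudoCoord, hsum, hjret]
    congr 1
    ring
end
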